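/- arXiv:1909.04552 — 4 statements merged into one kernel-verified Lean document; each statement's English description precedes it below -/
import Mathlib

section
/- Let ρ > -1 and for integers n ≥ 2 and 1 ≤ ℓ ≤ n define ν_{n,ℓ} := ℓ(ℓ+ρ)μ_{n,ℓ} / (n(1-μ_{n,ℓ})), where μ_{n,ℓ} := (n!/(n-ℓ)!) · Γ(n+ρ+1)/Γ(n+ℓ+ρ+1). Then ν_{n,ℓ} > ν_{n,ℓ+1} for all ℓ = 1, …, n-1. -/
noncomputable def mu (ρ : ℝ) (n ℓ : ℕ) : ℝ :=
  ((Nat.factorial n : ℝ) / (Nat.factorial (n - ℓ) : ℝ)) *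
    (Real.Gamma ((n : ℝ) + ρ + 1) / Real.Gamma ((n : ℝ) + (ℓ : ℝ) + ρ + 1))

noncomputable def nu (ρ : ℝ) (n ℓ : ℕ) : ℝ :=
  ((ℓ : ℝ) * ((ℓ : ℝ) + ρ) * mu ρ n ℓ) / ((n : ℝ) * (1 - mu ρ n ℓ))

lemma mu_pos (ρ : ℝ) (hρ : -1 < ρ) (n ℓ : ℕ) : 0 < mu ρ n ℓ := by
  have hn : (0:ℝ) ≤ (n:ℝ) := Nat.cast_nonneg n
  have hl : (0:ℝ) ≤ (ℓ:ℝ) := Nat.cast_nonneg ℓ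
  have h1 : (0:ℝ) < (n:ℝ) + ρ + 1 := by linarith
  have h2 : (0:ℝ) < (n:ℝ) + (ℓ:ℝ) + ρ + 1 := by linarith
  exact mul_pos
    (div_pos (Nat.cast_pos.mpr n.factorial_pos) (Nat.cast_pos.mpr (n - ℓ).factorial_pos))
    (div_pos (Real.Gamma_pos_of_pos h1) (Real.Gamma_pos_of_pos h2))

lemma mu_zero (ρ : ℝ) (hρ : -1 < ρ) (n : ℕ) : mu ρ n 0 = 1 := by
  have hn : (0:ℝ) ≤ (n:ℝ) := Nat.cast_nonneg n
  have h1 : (0:ℝ) < (n:ℝ) + ρ + 1 := by linarith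
  unfold mu
  rw [Nat.sub_zero, Nat.cast_zero, add_zero,
    div_self (ne_of_gt (Nat.cast_pos.mpr n.factorial_pos)),
    div_self (Real.Gamma_pos_of_pos h1).ne', mul_one]

lemma mu_succ (ρ : ℝ) (hρ : -1 < ρ) (n ℓ : ℕ) (h : ℓ < n) :
    mu ρ n (ℓ+1) = mu ρ n ℓ * (((n:ℝ) - (ℓ:ℝ)) / ((n:ℝ) + (ℓ:ℝ) + 1 + ρ)) := by
  have hn : (0:ℝ) ≤ (n:ℝ) := Nat.cast_nonneg n
  have hl : (0:ℝ) ≤ (ℓ:ℝ) := Nat.cast_nonneg ℓ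
  have hpos : (0:ℝ) < (n:ℝ) + (ℓ:ℝ) + ρ + 1 := by linarith
  have hΓ : Real.Gamma ((n:ℝ) + ((ℓ:ℝ)+1) + ρ + 1)
      = ((n:ℝ) + (ℓ:ℝ) + ρ + 1) * Real.Gamma ((n:ℝ) + (ℓ:ℝ) + ρ + 1) := by
    rw [show (n:ℝ) + ((ℓ:ℝ)+1) + ρ + 1 = ((n:ℝ) + (ℓ:ℝ) + ρ + 1) + 1 by ring,
      Real.Gamma_add_one hpos.ne']
  have hlt : ((ℓ:ℝ)) < (n:ℝ) := by exact_mod_cast h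
  have hfac : (Nat.factorial (n - ℓ) : ℝ)
      = ((n:ℝ) - (ℓ:ℝ)) * (Nat.factorial (n - (ℓ+1)) : ℝ) := by
    have hsub : n - ℓ = (n - (ℓ+1)) + 1 := by omega
    rw [hsub, Nat.factorial_succ, Nat.cast_mul]
    congr 1
    have h2 : n - (ℓ+1) + 1 = n - ℓ := by omega
    rw [h2, Nat.cast_sub h.le]
  have h1 : (Nat.factorial (n - (ℓ+1)) : ℝ) ≠ 0 :=
    (Nat.cast_pos.mpr (n - (ℓ+1)).factorial_pos).ne'
  have h2 : Real.Gamma ((n:ℝ) + (ℓ:ℝ) + ρ + 1) ≠ 0 := (Real.Gamma_pos_of_pos hpos).ne'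
  have h4 : (n:ℝ) - (ℓ:ℝ) ≠ 0 := by linarith
  have h5 : (n:ℝ) + (ℓ:ℝ) + 1 + ρ ≠ 0 := by linarith
  unfold mu
  push_cast
  rw [hΓ, hfac]
  field_simp
  ring

lemma mu_le_one (ρ : ℝ) (hρ : -1 < ρ) (n ℓ : ℕ) (h : ℓ ≤ n) : mu ρ n ℓ ≤ 1 := by
  induction ℓ with
  | zero => rw [mu_zero ρ hρ n]
  | succ m ih =>
    have hm : m < n := by omega
    have hn : (0:ℝ) ≤ (n:ℝ) := Nat.cast_nonneg n
    have hl : (0:ℝ) ≤ (m:ℝ) := Nat.cast_nonneg m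
    have hlt : ((m:ℝ)) < (n:ℝ) := by exact_mod_cast hm
    have hd : (0:ℝ) < (n:ℝ) + (m:ℝ) + 1 + ρ := by linarith
    have hc1 : ((n:ℝ) - (m:ℝ)) / ((n:ℝ) + (m:ℝ) + 1 + ρ) ≤ 1 := by
      rw [div_le_one hd]; linarith
    have hc0 : 0 ≤ ((n:ℝ) - (m:ℝ)) / ((n:ℝ) + (m:ℝ) + 1 + ρ) :=
      div_nonneg (by linarith) hd.le
    rw [mu_succ ρ hρ n m hm]
    calc mu ρ n m * (((n:ℝ) - (m:ℝ)) / ((n:ℝ) + (m:ℝ) + 1 + ρ))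
        ≤ 1 * (((n:ℝ) - (m:ℝ)) / ((n:ℝ) + (m:ℝ) + 1 + ρ)) :=
          mul_le_mul_of_nonneg_right (ih (by omega)) hc0
      _ ≤ 1 := by rw [one_mul]; exact hc1

lemma mu_lt_one (ρ : ℝ) (hρ : -1 < ρ) (n ℓ : ℕ) (h1 : 1 ≤ ℓ) (h : ℓ ≤ n) :
    mu ρ n ℓ < 1 := by
  obtain ⟨m, rfl⟩ : ∃ m, ℓ = m + 1 := ⟨ℓ - 1, by omega⟩
  have hm : m < n := by omega
  have hn : (0:ℝ) ≤ (n:ℝ) := Nat.cast_nonneg n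
  have hl : (0:ℝ) ≤ (m:ℝ) := Nat.cast_nonneg m
  have hlt : ((m:ℝ)) < (n:ℝ) := by exact_mod_cast hm
  have hd : (0:ℝ) < (n:ℝ) + (m:ℝ) + 1 + ρ := by linarith
  have hc1 : ((n:ℝ) - (m:ℝ)) / ((n:ℝ) + (m:ℝ) + 1 + ρ) < 1 := by
    rw [div_lt_one hd]; linarith
  have hc0 : 0 ≤ ((n:ℝ) - (m:ℝ)) / ((n:ℝ) + (m:ℝ) + 1 + ρ) :=
    div_nonneg (by linarith) hd.le
  rw [mu_succ ρ hρ n m hm]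
  calc mu ρ n m * (((n:ℝ) - (m:ℝ)) / ((n:ℝ) + (m:ℝ) + 1 + ρ))
      ≤ 1 * (((n:ℝ) - (m:ℝ)) / ((n:ℝ) + (m:ℝ) + 1 + ρ)) :=
        mul_le_mul_of_nonneg_right (mu_le_one ρ hρ n m (by omega)) hc0
    _ < 1 := by rw [one_mul]; exact hc1

lemma mu_ge (ρ : ℝ) (hρ : -1 < ρ) (n ℓ : ℕ) (h : ℓ ≤ n) :
    ((n:ℝ) + 1 + ρ) - (ℓ:ℝ) * ((ℓ:ℝ) + ρ) ≤ mu ρ n ℓ * ((n:ℝ) + 1 + ρ) := by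
  induction ℓ with
  | zero =>
    rw [mu_zero ρ hρ n]
    push_cast
    ring_nf
    norm_num
  | succ m ih =>
    have hm : m < n := by omega
    have hn : (0:ℝ) ≤ (n:ℝ) := Nat.cast_nonneg n
    have hl : (0:ℝ) ≤ (m:ℝ) := Nat.cast_nonneg m
    have hlt : ((m:ℝ)) < (n:ℝ) := by exact_mod_cast hm
    have hd : (0:ℝ) < (n:ℝ) + (m:ℝ) + 1 + ρ := by linarith
    have he : (0:ℝ) < (n:ℝ) + 1 + ρ := by linarith
    have hμ1 : mu ρ n m ≤ 1 := mu_le_one ρ hρ n m (by omega)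
    have ih' := ih (by omega)
    rw [mu_succ ρ hρ n m hm]
    rw [show mu ρ n m * (((n:ℝ) - (m:ℝ)) / ((n:ℝ) + (m:ℝ) + 1 + ρ)) * ((n:ℝ) + 1 + ρ)
        = (mu ρ n m * ((n:ℝ) - (m:ℝ)) * ((n:ℝ) + 1 + ρ)) / ((n:ℝ) + (m:ℝ) + 1 + ρ) by ring,
      le_div_iff₀ hd]
    push_cast
    have hA : (((n:ℝ) + 1 + ρ) - (m:ℝ) * ((m:ℝ) + ρ)) * ((n:ℝ) + (m:ℝ) + 1 + ρ)
        ≤ (mu ρ n m * ((n:ℝ) + 1 + ρ)) * ((n:ℝ) + (m:ℝ) + 1 + ρ) :=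
      mul_le_mul_of_nonneg_right ih' hd.le
    have hB : mu ρ n m * (((n:ℝ) + 1 + ρ) * (2*(m:ℝ) + 1 + ρ))
        ≤ 1 * (((n:ℝ) + 1 + ρ) * (2*(m:ℝ) + 1 + ρ)) :=
      mul_le_mul_of_nonneg_right hμ1 (by nlinarith)
    nlinarith [hA, hB]

theorem nu_strict_anti (ρ : ℝ) (hρ : -1 < ρ) (n : ℕ) (hn : 2 ≤ n) (ℓ : ℕ)
    (h1 : 1 ≤ ℓ) (h2 : ℓ ≤ n - 1) :
    nu ρ n (ℓ + 1) < nu ρ n ℓ := by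
  have hℓn : ℓ < n := by omega
  have hn0 : (0:ℝ) < (n:ℝ) := by exact_mod_cast (by omega : 0 < n)
  have hL1 : (1:ℝ) ≤ (ℓ:ℝ) := by exact_mod_cast h1
  have hnL : ((ℓ:ℝ)) + 1 ≤ (n:ℝ) := by exact_mod_cast hℓn
  set L : ℝ := (ℓ:ℝ) with hLdef
  have hμpos : 0 < mu ρ n ℓ := mu_pos ρ hρ n ℓ
  have hμlt : mu ρ n ℓ < 1 := mu_lt_one ρ hρ n ℓ h1 hℓn.le
  have hμ'pos : 0 < mu ρ n (ℓ+1) := mu_pos ρ hρ n (ℓ+1)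
  have hμ'lt : mu ρ n (ℓ+1) < 1 := mu_lt_one ρ hρ n (ℓ+1) (by omega) (by omega)
  have hstep := mu_succ ρ hρ n ℓ hℓn
  have hd : (0:ℝ) < (n:ℝ) + L + 1 + ρ := by linarith
  have he : (0:ℝ) < (n:ℝ) + 1 + ρ := by linarith
  have h2L : (0:ℝ) < 2*L + 1 + ρ := by linarith
  have hnLpos : (0:ℝ) < (n:ℝ) - L := by linarith
  set μ : ℝ := mu ρ n ℓ with hμdef
  set c : ℝ := ((n:ℝ) - L) / ((n:ℝ) + L + 1 + ρ) with hcdef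
  have hc : c * ((n:ℝ) + L + 1 + ρ) = (n:ℝ) - L := div_mul_cancel₀ _ hd.ne'
  have hc0 : 0 < c := div_pos hnLpos hd
  -- key bound: N < (2L+1+ρ)(n-L) μ
  have hb' := mu_ge ρ hρ n ℓ hℓn.le
  have hq : (0:ℝ) < L * (L + ρ) * (L + ρ + 1) * (2*L + ρ + 1) := by
    have hLρ : (0:ℝ) < L + ρ := by linarith
    exact mul_pos (mul_pos (mul_pos (by linarith : (0:ℝ) < L) hLρ) (by linarith)) (by linarith)
  have hpoly : ((L+1) * (L+1+ρ) * ((n:ℝ)-L) - L*(L+ρ)*((n:ℝ)+L+1+ρ)) * ((n:ℝ)+1+ρ)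
      < (2*L+1+ρ) * ((n:ℝ)-L) * (((n:ℝ)+1+ρ) - L*(L+ρ)) := by linarith [hq]
  have h6 : (2*L+1+ρ) * ((n:ℝ)-L) * (((n:ℝ)+1+ρ) - L*(L+ρ))
      ≤ (2*L+1+ρ) * ((n:ℝ)-L) * (μ * ((n:ℝ)+1+ρ)) :=
    mul_le_mul_of_nonneg_left hb' (by positivity)
  have hkey : (L+1) * (L+1+ρ) * ((n:ℝ)-L) - L*(L+ρ)*((n:ℝ)+L+1+ρ)
      < (2*L+1+ρ) * ((n:ℝ)-L) * μ := by
    have h7 : ((L+1) * (L+1+ρ) * ((n:ℝ)-L) - L*(L+ρ)*((n:ℝ)+L+1+ρ)) * ((n:ℝ)+1+ρ)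
        < ((2*L+1+ρ) * ((n:ℝ)-L) * μ) * ((n:ℝ)+1+ρ) := by linarith [hpoly, h6]
    exact lt_of_mul_lt_mul_right h7 he.le
  -- turn hkey into the statement about the nu quotient
  have h5 : 0 < L*(L+ρ)*(1 - μ*c) - (L+1)*(L+1+ρ)*c*(1-μ) := by
    have hid : (L*(L+ρ)*(1 - μ*c) - (L+1)*(L+1+ρ)*c*(1-μ)) * ((n:ℝ) + L + 1 + ρ)
        = (2*L+1+ρ) * ((n:ℝ)-L) * μ
          - ((L+1) * (L+1+ρ) * ((n:ℝ)-L) - L*(L+ρ)*((n:ℝ)+L+1+ρ)) := by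
      linear_combination ((L+1)*(L+1+ρ)*μ - (L+1)*(L+1+ρ) - L*(L+ρ)*μ) * hc
    have hXd : 0 < (L*(L+ρ)*(1 - μ*c) - (L+1)*(L+1+ρ)*c*(1-μ)) * ((n:ℝ) + L + 1 + ρ) := by
      rw [hid]; linarith [hkey]
    by_contra hcon
    push_neg at hcon
    nlinarith [hXd, hd, hcon]
  unfold nu
  rw [div_lt_div_iff₀ (mul_pos hn0 (by linarith : (0:ℝ) < 1 - mu ρ n (ℓ+1)))
    (mul_pos hn0 (by linarith : (0:ℝ) < 1 - mu ρ n ℓ))]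
  push_cast
  rw [hstep]
  linarith [mul_pos (mul_pos hn0 hμpos) h5]
end

section
/- Let ρ > -1. For integers n ≥ 3 and 1 ≤ ℓ ≤ n-2, the quantity ξ_{n,ℓ} := (n-ℓ-1)! · Γ(n+ℓ+ρ+1) · [n - ℓ(ℓ+ρ+1)] satisfies ξ_{n,ℓ} > ξ_{n,ℓ+1}. -/
noncomputable def xi (ρ : ℝ) (n ℓ : ℕ) : ℝ :=
  (Nat.factorial (n - ℓ - 1) : ℝ) * Real.Gamma ((n : ℝ) + (ℓ : ℝ) + ρ + 1) *
    ((n : ℝ) - (ℓ : ℝ) * ((ℓ : ℝ) + ρ + 1))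

theorem xi_strict_anti (ρ : ℝ) (hρ : -1 < ρ) (n ℓ : ℕ) (hn : 3 ≤ n)
    (h1 : 1 ≤ ℓ) (h2 : ℓ ≤ n - 2) :
    xi ρ n (ℓ + 1) < xi ρ n ℓ := by
  have hℓn : ℓ + 2 ≤ n := by omega
  have hnR : (ℓ : ℝ) + 2 ≤ (n : ℝ) := by exact_mod_cast hℓn
  have hℓR : (1 : ℝ) ≤ (ℓ : ℝ) := by exact_mod_cast h1
  have hx : (0:ℝ) < (n:ℝ) + (ℓ:ℝ) + ρ + 1 := by nlinarith
  have hG : 0 < Real.Gamma ((n:ℝ) + (ℓ:ℝ) + ρ + 1) := Real.Gamma_pos_of_pos hx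
  have hfacpos : (0:ℝ) < (Nat.factorial (n - (ℓ+1) - 1) : ℝ) := by
    exact_mod_cast Nat.factorial_pos _
  have hsub : ((n - (ℓ+1) - 1 : ℕ) : ℝ) = (n:ℝ) - (ℓ:ℝ) - 2 := by
    have h : n - (ℓ+1) - 1 = n - (ℓ + 2) := by omega
    rw [h, Nat.cast_sub hℓn]; push_cast; ring
  have hfac : (Nat.factorial (n - ℓ - 1) : ℝ) =
      ((n:ℝ) - (ℓ:ℝ) - 1) * (Nat.factorial (n - (ℓ+1) - 1) : ℝ) := by
    have h : n - ℓ - 1 = (n - (ℓ+1) - 1) + 1 := by omega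
    rw [h, Nat.factorial_succ]
    push_cast [hsub]; ring
  have hGrec : Real.Gamma ((n:ℝ) + ((ℓ:ℝ)+1) + ρ + 1) =
      ((n:ℝ) + (ℓ:ℝ) + ρ + 1) * Real.Gamma ((n:ℝ) + (ℓ:ℝ) + ρ + 1) := by
    have h : (n:ℝ) + ((ℓ:ℝ)+1) + ρ + 1 = ((n:ℝ) + (ℓ:ℝ) + ρ + 1) + 1 := by ring
    rw [h, Real.Gamma_add_one (ne_of_gt hx)]
  have hs : (0:ℝ) < (ℓ:ℝ) + ρ + 1 := by linarith
  have ht : (0:ℝ) < (ℓ:ℝ) + 1 := by linarith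
  have hu : (0:ℝ) < 2*(ℓ:ℝ) + ρ + 2 := by linarith
  unfold xi
  push_cast
  rw [hGrec, hfac]
  nlinarith [mul_pos hfacpos hG, mul_pos (mul_pos hfacpos hG) hx,
    mul_pos (mul_pos hfacpos hG) (mul_pos (mul_pos hs ht) hu)]
end

section
/- For real ρ ≥ 0 and integers 3 ≤ ℓ ≤ n, 1 - μ_{n,ℓ} ≥ c·ℓ² n^{ℓ-1} / ((n+ρ+1)(n+ρ+2)⋯(n+ρ+ℓ)) for some absolute constant c > 0, where μ_{n,ℓ} = n(n-1)⋯(n-ℓ+1) / ((n+ρ+1)(n+ρ+2)⋯(n+ρ+ℓ)). -/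
open Finset

theorem Real.Gamma_add_nat_add_one {x : ℝ} {k : ℕ} (hx : ∀ i ∈ Icc 1 k, x + i ≠ 0) :
    Real.Gamma (x + k + 1) = Real.Gamma (x + 1) * ∏ i ∈ Icc 1 k, (x + i) := by
  induction k with
  | zero => simp
  | succ k ih =>
    have hk : x + (k + 1 : ℕ) ≠ 0 := hx (k + 1) (by simp)
    rw [prod_Icc_succ_top (by omega), ← mul_assoc,
      ← ih fun i hi => hx i (Icc_subset_Icc_right k.le_succ hi), Real.Gamma_add_one hk]
    push_cast
    ring_nf

theorem mu_eq_descFactorial_div_prod {ρ : ℝ} (hρ : 0 ≤ ρ) {n ℓ : ℕ} (hℓn : ℓ ≤ n) :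
    mu ρ n ℓ = n.descFactorial ℓ / ∏ i ∈ Icc 1 ℓ, ((n : ℝ) + ρ + i) := by
  have hfactors : ∀ i ∈ Icc 1 ℓ, (n : ℝ) + ρ + i ≠ 0 := fun i hi => by
    have : (1 : ℝ) ≤ i := by exact_mod_cast (mem_Icc.1 hi).1
    positivity
  have hGamma : Real.Gamma ((n : ℝ) + ρ + 1) ≠ 0 := (Real.Gamma_pos_of_pos (by positivity)).ne'
  have hfact : ((n - ℓ).factorial : ℝ) ≠ 0 := by positivity
  rw [mu, show (n : ℝ) + ℓ + ρ + 1 = n + ρ + ℓ + 1 by ring, Real.Gamma_add_nat_add_one hfactors,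
    ← Nat.factorial_mul_descFactorial hℓn, Nat.cast_mul]
  field_simp

theorem Finset.pow_add_sum_mul_pow_le_prod_add {R ι : Type*} [CommSemiring R] [PartialOrder R]
    [IsOrderedRing R] (s : Finset ι) {a : ι → R} (ha : ∀ i ∈ s, 0 ≤ a i) {x : R} (hx : 0 ≤ x) :
    x ^ #s + (∑ i ∈ s, a i) * x ^ (#s - 1) ≤ ∏ i ∈ s, (x + a i) := by
  classical
  induction s using Finset.induction_on with
  | empty => simp
  | insert j s hj ih =>
    have ha' : ∀ i ∈ s, 0 ≤ a i := fun i hi => ha i (mem_insert_of_mem hi)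
    have ih := ih ha'
    have haj : 0 ≤ a j := ha j (mem_insert_self j s)
    rw [card_insert_of_notMem hj, sum_insert hj, prod_insert hj, Nat.add_sub_cancel]
    rcases s.eq_empty_or_nonempty with rfl | hs
    · simp
    · have hpow : x ^ (#s - 1) * x = x ^ #s := by
        rw [← pow_succ, Nat.sub_add_cancel hs.card_pos]
      calc x ^ (#s + 1) + (a j + ∑ i ∈ s, a i) * x ^ #s
          ≤ x ^ (#s + 1) + (a j + ∑ i ∈ s, a i) * x ^ #s + a j * ((∑ i ∈ s, a i) * x ^ (#s - 1)) :=
            le_add_of_nonneg_right (by have := sum_nonneg ha'; positivity)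
        _ = (x + a j) * (x ^ #s + (∑ i ∈ s, a i) * x ^ (#s - 1)) := by rw [pow_succ, ← hpow]; ring
        _ ≤ (x + a j) * ∏ i ∈ s, (x + a i) := by gcongr

theorem Finset.sum_Icc_id_mul_two (n : ℕ) : (∑ i ∈ Icc 1 n, i) * 2 = n * (n + 1) := by
  induction n with
  | zero => simp
  | succ n ih => rw [sum_Icc_succ_top (by omega), add_mul, ih]; ring

theorem sq_mul_pow_le_prod_add_sub_descFactorial {ρ : ℝ} (hρ : 0 ≤ ρ) (n ℓ : ℕ) :
    (ℓ : ℝ) ^ 2 / 2 * (n : ℝ) ^ (ℓ - 1) ≤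
      ∏ i ∈ Icc 1 ℓ, ((n : ℝ) + ρ + i) - n.descFactorial ℓ := by
  have hsum : (ℓ : ℝ) ^ 2 / 2 ≤ ∑ i ∈ Icc 1 ℓ, (i : ℝ) := by
    have := congrArg (Nat.cast (R := ℝ)) (sum_Icc_id_mul_two ℓ)
    push_cast at this
    nlinarith
  have hprod := pow_add_sum_mul_pow_le_prod_add (Icc 1 ℓ) (a := fun i : ℕ => (i : ℝ))
    (fun i _ => i.cast_nonneg) (add_nonneg n.cast_nonneg hρ)
  have hdesc : (n.descFactorial ℓ : ℝ) ≤ (n : ℝ) ^ ℓ := by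
    exact_mod_cast n.descFactorial_le_pow ℓ
  have hn : (n : ℝ) ≤ n + ρ := le_add_of_nonneg_right hρ
  simp only [Nat.card_Icc, Nat.add_sub_cancel] at hprod
  calc (ℓ : ℝ) ^ 2 / 2 * (n : ℝ) ^ (ℓ - 1)
      ≤ (∑ i ∈ Icc 1 ℓ, (i : ℝ)) * ((n : ℝ) + ρ) ^ (ℓ - 1) := by gcongr
    _ ≤ ((n : ℝ) + ρ) ^ ℓ - (n : ℝ) ^ ℓ + (∑ i ∈ Icc 1 ℓ, (i : ℝ)) * ((n : ℝ) + ρ) ^ (ℓ - 1) := by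
      have : (n : ℝ) ^ ℓ ≤ ((n : ℝ) + ρ) ^ ℓ := by gcongr
      linarith
    _ ≤ ∏ i ∈ Icc 1 ℓ, ((n : ℝ) + ρ + i) - n.descFactorial ℓ := by linarith

theorem one_sub_mu_lower_bound :
    ∃ c : ℝ, 0 < c ∧ ∀ (ρ : ℝ), 0 ≤ ρ → ∀ n ℓ : ℕ, 3 ≤ ℓ → ℓ ≤ n →
      1 - mu ρ n ℓ
        ≥ c * (ℓ : ℝ) ^ 2 * (n : ℝ) ^ (ℓ - 1) / ∏ i ∈ Finset.Icc 1 ℓ, ((n : ℝ) + ρ + (i : ℝ)) := by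
  refine ⟨1 / 2, one_half_pos, fun ρ hρ n ℓ _ hℓn => ?_⟩
  have hprod : 0 < ∏ i ∈ Icc 1 ℓ, ((n : ℝ) + ρ + i) := prod_pos fun i hi => by
    have : (1 : ℝ) ≤ i := by exact_mod_cast (mem_Icc.1 hi).1
    positivity
  rw [mu_eq_descFactorial_div_prod hρ hℓn, one_sub_div hprod.ne', ge_iff_le]
  gcongr
  linarith [sq_mul_pow_le_prod_add_sub_descFactorial hρ n ℓ]
end

section
/- Let ρ ≥ 0, 0 < δ ≤ 1, and n ≥ 3. For integers ℓ with δn ≤ ℓ ≤ n, one has n²·ν_{n,ℓ} ≤ c, where ν_{n,ℓ} := ℓ(ℓ+ρ)μ_{n,ℓ}/(n(1-μ_{n,ℓ})), μ_{n,ℓ} := (n!/(n-ℓ)!)·Γ(n+ρ+1)/Γ(n+ℓ+ρ+1), and c is a constant depending only on ρ and δ (not on n or ℓ). -/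
/-! Writing `μ_{n,ℓ} = ∏_{i<ℓ} (n-ℓ+1+i)/(n+ρ+1+i)`, every factor is at most `n/(n+ℓ) ≤ 1/(1+δ)`
when `δn ≤ ℓ`. So `μ_{n,ℓ}` decays geometrically in `ℓ`, which beats the polynomial factor
`n²ν_{n,ℓ}(1-μ_{n,ℓ}) = nℓ(ℓ+ρ)μ_{n,ℓ} ≲ ℓ³ μ_{n,ℓ}/δ`, while `1 - μ_{n,ℓ} ≥ δ/(1+δ)` stays
away from `0`. -/

open Finset Filter

lemma Real.Gamma_add_nat_eq_mul_prod {x : ℝ} (hx : 0 < x) (k : ℕ) :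
    Real.Gamma (x + k) = Real.Gamma x * ∏ i ∈ range k, (x + i) := by
  induction k with
  | zero => simp
  | succ k ih =>
    rw [Nat.cast_succ, ← add_assoc, Real.Gamma_add_one (by positivity), ih, prod_range_succ]
    ring

lemma Nat.cast_factorial_add_eq_mul_prod (m k : ℕ) :
    ((m + k).factorial : ℝ) = m.factorial * ∏ i ∈ range k, ((m : ℝ) + 1 + i) := by
  rw [← Nat.factorial_mul_ascFactorial, Nat.ascFactorial_eq_prod_range]
  push_cast
  rfl

lemma exists_forall_pow_mul_pow_le {q : ℝ} (hq : |q| < 1) (k : ℕ) :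
    ∃ C : ℝ, ∀ ℓ : ℕ, (ℓ : ℝ) ^ k * q ^ ℓ ≤ C := by
  obtain ⟨C, hC⟩ := (tendsto_pow_const_mul_const_pow_of_abs_lt_one k hq).bddAbove_range
  exact ⟨C, fun ℓ ↦ hC ⟨ℓ, rfl⟩⟩

section

variable {ρ : ℝ} {n ℓ : ℕ}

lemma mu_eq_prod (hρ : -1 < ρ) (hℓn : ℓ ≤ n) :
    mu ρ n ℓ = ∏ i ∈ range ℓ, (((n - ℓ : ℕ) : ℝ) + 1 + i) / ((n : ℝ) + ρ + 1 + i) := by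
  have hx : (0 : ℝ) < n + ρ + 1 := by linarith [(Nat.cast_nonneg n : (0 : ℝ) ≤ n)]
  have hΓ : (n : ℝ) + ℓ + ρ + 1 = (n + ρ + 1) + (ℓ : ℕ) := by ring
  obtain ⟨m, rfl⟩ := Nat.exists_eq_add_of_le' hℓn
  rw [mu, hΓ, Real.Gamma_add_nat_eq_mul_prod hx, Nat.cast_factorial_add_eq_mul_prod,
    Nat.add_sub_cancel, prod_div_distrib]
  have : 0 < ∏ i ∈ range ℓ, ((m + ℓ : ℕ) + ρ + 1 + (i : ℝ)) := prod_pos fun i _ ↦ by positivity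
  field_simp [(Real.Gamma_pos_of_pos hx).ne']

lemma mu_nonneg (hρ : -1 < ρ) (hℓn : ℓ ≤ n) : 0 ≤ mu ρ n ℓ := by
  rw [mu_eq_prod hρ hℓn]
  exact prod_nonneg fun i _ ↦ div_nonneg (by positivity)
    (by linarith [(Nat.cast_nonneg n : (0 : ℝ) ≤ n), (Nat.cast_nonneg i : (0 : ℝ) ≤ i)])

lemma mu_le_div_pow (hρ : 0 ≤ ρ) (hℓn : ℓ ≤ n) : mu ρ n ℓ ≤ ((n : ℝ) / (n + ℓ)) ^ ℓ := by
  rw [mu_eq_prod (by linarith) hℓn]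
  refine (prod_le_prod (g := fun _ ↦ (n : ℝ) / (n + ℓ)) (fun i _ ↦ by positivity)
    fun i hi ↦ ?_).trans_eq (by rw [prod_const, card_range])
  have hi : (i : ℝ) + 1 ≤ ℓ := by exact_mod_cast mem_range.mp hi
  have hℓ : (0 : ℝ) < ℓ := by linarith [(Nat.cast_nonneg i : (0 : ℝ) ≤ i)]
  rw [Nat.cast_sub hℓn, div_le_div_iff₀ (by positivity) (by positivity)]
  nlinarith [mul_nonneg (n.cast_nonneg : (0 : ℝ) ≤ n) hρ, mul_nonneg (sub_nonneg.mpr hi) hℓ.le]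

lemma mu_le_inv_pow {δ : ℝ} (hρ : 0 ≤ ρ) (hδ : 0 < δ) (hδℓ : δ * n ≤ ℓ) (hℓn : ℓ ≤ n) :
    mu ρ n ℓ ≤ (1 + δ)⁻¹ ^ ℓ := by
  refine (mu_le_div_pow hρ hℓn).trans (pow_le_pow_left₀ (by positivity) ?_ ℓ)
  rcases (n.cast_nonneg : (0 : ℝ) ≤ n).eq_or_lt with hn | hn
  · simp [← hn]
    positivity
  · rw [div_le_iff₀ (by positivity)]
    field_simp
    linarith

lemma sq_mul_nu (hn : n ≠ 0) (hμ : mu ρ n ℓ ≠ 1) :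
    (n : ℝ) ^ 2 * nu ρ n ℓ = n * (ℓ * (ℓ + ρ) * mu ρ n ℓ) / (1 - mu ρ n ℓ) := by
  have : 1 - mu ρ n ℓ ≠ 0 := sub_ne_zero.mpr hμ.symm
  rw [nu]
  field_simp

end

theorem nsq_nu_bounded_general (ρ : ℝ) (hρ : 0 ≤ ρ) (δ : ℝ) (h1 : 0 < δ) :
    ∃ c : ℝ, ∀ n : ℕ, 3 ≤ n → ∀ ℓ : ℕ, δ * (n : ℝ) ≤ (ℓ : ℝ) → ℓ ≤ n →
      (n : ℝ) ^ 2 * nu ρ n ℓ ≤ c := by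
  set q := (1 + δ)⁻¹
  have hq₀ : 0 < q := by positivity
  have hq₁ : q < 1 := inv_lt_one_of_one_lt₀ (by linarith)
  obtain ⟨C, hC⟩ := exists_forall_pow_mul_pow_le (by rwa [abs_of_pos hq₀]) 3
  refine ⟨(1 + ρ) * C / (δ * (1 - q)), fun n hn ℓ hδℓ hℓn ↦ ?_⟩
  have hn₀ : (0 : ℝ) < n := Nat.cast_pos.mpr (by omega)
  have hℓ₀ : ℓ ≠ 0 := by rintro rfl; simp at hδℓ; nlinarith
  have hℓ : (1 : ℝ) ≤ ℓ := by exact_mod_cast Nat.one_le_iff_ne_zero.mpr hℓ₀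
  have hμ := mu_le_inv_pow hρ h1 hδℓ hℓn
  have hμq : mu ρ n ℓ ≤ q := hμ.trans (pow_le_of_le_one hq₀.le hq₁.le hℓ₀)
  have hμ₀ : 0 ≤ mu ρ n ℓ := mu_nonneg (by linarith) hℓn
  have hnℓ : (n : ℝ) ≤ ℓ / δ := by rw [le_div_iff₀ h1]; linarith
  have hℓρ : (ℓ : ℝ) + ρ ≤ ℓ * (1 + ρ) := by nlinarith
  rw [sq_mul_nu (by omega) (by linarith)]
  calc (n : ℝ) * (ℓ * (ℓ + ρ) * mu ρ n ℓ) / (1 - mu ρ n ℓ)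
      ≤ ℓ / δ * (ℓ * (ℓ * (1 + ρ)) * q ^ ℓ) / (1 - q) := by gcongr
    _ = (1 + ρ) * ((ℓ : ℝ) ^ 3 * q ^ ℓ) / (δ * (1 - q)) := by field_simp
    _ ≤ (1 + ρ) * C / (δ * (1 - q)) := by gcongr; exact hC ℓ

theorem nsq_nu_bounded (ρ : ℝ) (hρ : 0 ≤ ρ) (δ : ℝ) (h1 : 0 < δ) (h2 : δ ≤ 1) :
    ∃ c : ℝ, ∀ n : ℕ, 3 ≤ n → ∀ ℓ : ℕ, δ * (n : ℝ) ≤ (ℓ : ℝ) → ℓ ≤ n →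
      (n : ℝ) ^ 2 * nu ρ n ℓ ≤ c :=
  nsq_nu_bounded_general ρ hρ δ h1
end
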